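/- Let P, Q : ℤ × ℝ → ℝ be differentiable in the time variable t with P(n,t) ≠ 0 for all n, t, and suppose they satisfy the first positive flow of the Ablowitz–Ladik hierarchy: ∂ₜP(n) = P(n)(Q(n+1) − Q(n)) and ∂ₜQ(n) = Q(n)(Q(n+1) − Q(n−1) − P(n) + P(n−1)). Then P̂(n,t) = 1/P(n,t) and Q̂(n,t) = Q(n+1,t)/(P(n,t)P(n+1,t)) satisfy ∂ₜP̂(n) = Q̂(n−1)/P̂(n−1) − Q̂(n)/P̂(n+1) and ∂ₜQ̂(n) = Q̂(n)/P̂(n) − Q̂(n)/P̂(n+1); that is, under the transformation P → 1/P, Q → Q⁺/(PP⁺) together with the reversal of the shift, the first positive flow becomes the first negative flow P_{s₀} = Q⁺/P⁺ − Q/P⁻, Q_{s₀} = Q/P − Q/P⁻. -/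

import Mathlib

/-! Both flows are written in logarithmic form `f' = f · a`. The rate of `1/P` is `Q - Q⁺`, and the
rate of `Q⁺/(P P⁺)` is the rate of `Q⁺` minus those of `P` and `P⁺`, in which all `Q`-terms cancel
and only `P - P⁺ = 1/P̂ - 1/P̂⁺` is left. -/

section LogarithmicDerivative

variable {𝕜 𝕜' : Type*} [NontriviallyNormedField 𝕜] [NontriviallyNormedField 𝕜']
  [NormedAlgebra 𝕜 𝕜'] {f g : 𝕜 → 𝕜'} {a b : 𝕜'} {x : 𝕜}

theorem HasDerivAt.inv_of_logDeriv (hf : HasDerivAt f (f x * a) x) (hx : f x ≠ 0) :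
    HasDerivAt (fun y => (f y)⁻¹) ((f x)⁻¹ * -a) x :=
  (hf.fun_inv hx).congr_deriv (by field_simp)

theorem HasDerivAt.mul_of_logDeriv (hf : HasDerivAt f (f x * a) x)
    (hg : HasDerivAt g (g x * b) x) :
    HasDerivAt (fun y => f y * g y) (f x * g x * (a + b)) x :=
  (hf.fun_mul hg).congr_deriv (by ring)

theorem HasDerivAt.div_of_logDeriv (hf : HasDerivAt f (f x * a) x)
    (hg : HasDerivAt g (g x * b) x) (hx : g x ≠ 0) :
    HasDerivAt (fun y => f y / g y) (f x / g x * (a - b)) x :=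
  (hf.fun_div hg hx).congr_deriv (by field_simp)

end LogarithmicDerivative

theorem first_positive_flow_to_negative_flow
    (P Q : ℤ → ℝ → ℝ)
    (hP : ∀ (n : ℤ) (t : ℝ), P n t ≠ 0)
    (hflowP : ∀ (n : ℤ) (t : ℝ),
      HasDerivAt (P n) (P n t * (Q (n + 1) t - Q n t)) t)
    (hflowQ : ∀ (n : ℤ) (t : ℝ),
      HasDerivAt (Q n) (Q n t * (Q (n + 1) t - Q (n - 1) t - P n t + P (n - 1) t)) t)
    (Phat Qhat : ℤ → ℝ → ℝ)
    (hPhat : ∀ (n : ℤ) (t : ℝ), Phat n t = 1 / P n t)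
    (hQhat : ∀ (n : ℤ) (t : ℝ), Qhat n t = Q (n + 1) t / (P n t * P (n + 1) t)) :
    ∀ (n : ℤ) (t : ℝ),
      HasDerivAt (Phat n) (Qhat (n - 1) t / Phat (n - 1) t - Qhat n t / Phat (n + 1) t) t ∧
      HasDerivAt (Qhat n) (Qhat n t / Phat n t - Qhat n t / Phat (n + 1) t) t := by
  obtain rfl : Phat = fun n t => (P n t)⁻¹ := by
    funext n t
    rw [hPhat, one_div]
  obtain rfl : Qhat = fun n t => Q (n + 1) t / (P n t * P (n + 1) t) := by
    funext n t
    exact hQhat n t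
  intro n t
  have hPinv := (hflowP n t).inv_of_logDeriv (hP n t)
  have hQshift := (hflowQ (n + 1) t).div_of_logDeriv
    ((hflowP n t).mul_of_logDeriv (hflowP (n + 1) t)) (mul_ne_zero (hP n t) (hP (n + 1) t))
  simp only [sub_add_cancel, add_sub_cancel_right] at hPinv hQshift ⊢
  constructor
  · refine hPinv.congr_deriv ?_
    field_simp [hP n t, hP (n - 1) t, hP (n + 1) t]
    ring
  · refine hQshift.congr_deriv ?_
    field_simp [hP n t, hP (n + 1) t]
    ring
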